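/- arXiv:2105.13941 — 8 statements merged into one kernel-verified Lean document; each statement's English description precedes it below -/
import Mathlib

section
/- For every deterministic affine transition system T on a finite-dimensional ℚ-vector space V there exists a ℚ-DATS-reflection of T: there exist a finite-dimensional ℚ-vector space W, a ℚ-DATS U on W, and a linear simulation s : T → U such that for every ℚ-DATS Z on a finite-dimensional ℚ-vector space and every linear simulation t : T → Z, there is a unique linear simulation t̄ : U → Z with t̄ ∘ s = t. -/
open Module

section Defs

variable {V W : Type} [AddCommGroup V] [Module ℚ V] [AddCommGroup W] [Module ℚ W]

/-- A transition system is *deterministic* if each state has at most one successor. -/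
def Deterministic (R : Set (V × V)) : Prop :=
  ∀ x y₁ y₂ : V, (x, y₁) ∈ R → (x, y₂) ∈ R → y₁ = y₂

/-- A transition system is *linear* if its relation is (the carrier of) a ℚ-linear
subspace of `V × V`. -/
def IsLinearRel (R : Set (V × V)) : Prop :=
  ∃ p : Submodule ℚ (V × V), (p : Set (V × V)) = R

/-- A transition system is *affine* if its relation is an affine subspace of `V × V`. -/
def IsAffineRel (R : Set (V × V)) : Prop :=
  ∃ A : AffineSubspace ℚ (V × V), (A : Set (V × V)) = R

/-- A ℚ-linear map `s` is a *linear simulation* from `(V, R)` to `(W, S)`. -/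
def Sim (R : Set (V × V)) (S : Set (W × W)) (s : V →ₗ[ℚ] W) : Prop :=
  ∀ x x' : V, (x, x') ∈ R → (s x, s x') ∈ S

/-- `dom^ω(T)`: the set of states from which an infinite trajectory exists. -/
def OmegaDom (R : Set (V × V)) : Set V :=
  {x | ∃ u : ℕ → V, u 0 = x ∧ ∀ k : ℕ, (u k, u (k + 1)) ∈ R}

/-- `dom(T^k)`: the set of states from which a trajectory of length `k` exists. -/
def DomK (R : Set (V × V)) (k : ℕ) : Set V :=
  {x | ∃ u : ℕ → V, u 0 = x ∧ ∀ i : ℕ, i < k → (u i, u (i + 1)) ∈ R}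

/-- A (deterministic linear) transition system has *rational spectrum* if the induced
linear map `T|_ω` on its ω-domain has characteristic polynomial splitting over ℚ. -/
def HasRationalSpectrum [FiniteDimensional ℚ V] (R : Set (V × V)) : Prop :=
  ∃ (p : Submodule ℚ V) (f : Module.End ℚ p),
    (p : Set V) = OmegaDom R ∧ (∀ x : p, ((x : V), (f x : V)) ∈ R) ∧
    (LinearMap.charpoly f).Splits

/-- The homogenization of an affine relation `R` with respect to a chosen
transition `(x₀, x₀')`. -/
def Homog (R : Set (V × V)) (x₀ x₀' : V) : Set ((V × ℚ) × (V × ℚ)) :=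
  {p | p.1.2 = p.2.2 ∧ (p.1.1 + (1 - p.1.2) • x₀, p.2.1 + (1 - p.1.2) • x₀') ∈ R}

/-- A deterministic affine transition system is a ℚ-DATS if its relation is empty or
its homogenization is a deterministic linear transition system with rational spectrum. -/
def IsQDATS [FiniteDimensional ℚ V] (R : Set (V × V)) : Prop :=
  IsAffineRel R ∧ Deterministic R ∧
    (R = ∅ ∨ ∃ t ∈ R, IsLinearRel (Homog R t.1 t.2) ∧ Deterministic (Homog R t.1 t.2) ∧
      HasRationalSpectrum (Homog R t.1 t.2))

/-- The map `s : V → Λ*` sending `x` to the evaluation functional `f ↦ f x`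
(the simulation component of `α_Λ`). -/
def evalIn (Λ : Submodule ℚ (Module.Dual ℚ V)) : V →ₗ[ℚ] Module.Dual ℚ Λ :=
  Λ.subtype.dualMap ∘ₗ Module.Dual.eval ℚ V

/-- The relation component of `α_Λ`: the image of `R` under the simulation. -/
def ImageRel (R : Set (V × V)) (Λ : Submodule ℚ (Module.Dual ℚ V)) :
    Set (Module.Dual ℚ Λ × Module.Dual ℚ Λ) :=
  (fun p : V × V => (evalIn Λ p.1, evalIn Λ p.2)) '' R

/-- `T` is `(Λ, Λ')`-deterministic. -/
def PairDet (R : Set (V × V)) (Λ Λ' : Submodule ℚ (Module.Dual ℚ V)) : Prop :=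
  ∀ x₁ x₂ x₁' x₂' : V, (∀ f ∈ Λ, f x₁ = f x₂) → (x₁, x₁') ∈ R → (x₂, x₂') ∈ R →
    ∀ g ∈ Λ', g x₁' = g x₂'

/-- `Det(T, Λ)`: the functionals `f` such that `T` is `(Λ, span{f})`-deterministic. -/
def DetSet (R : Set (V × V)) (Λ : Submodule ℚ (Module.Dual ℚ V)) :
    Set (Module.Dual ℚ V) :=
  {f | PairDet R Λ (Submodule.span ℚ {f})}

/-- The generating set of the generalized rational eigenspace `E_ℚ(T)`, where
`f : p → p` is the induced map `T|_ω` on the ω-domain `p`. -/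
def GenRatEigenSet (p : Submodule ℚ V) (f : Module.End ℚ p) : Set (Module.Dual ℚ V) :=
  {g | ∃ (l : ℚ) (r : ℕ), 1 ≤ r ∧
    ∀ x : p, g (((f - l • (1 : Module.End ℚ p)) ^ r) x : V) = 0}

end Defs

/-- A bundled finite-dimensional ℚ-vector space. -/
structure QVec where
  carrier : Type
  [grp : AddCommGroup carrier]
  [mod : Module ℚ carrier]
  [fin : FiniteDimensional ℚ carrier]

attribute [instance] QVec.grp QVec.mod QVec.fin

/-!
The reflection is a quotient of `V`. A simulation `t` of `T` into a ℚ-DATS `Z` factors through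
`V ⧸ ker t`, and the image of `T` there is again a ℚ-DATS: it embeds into `Z`, and determinism and
rational spectrum pass to subsystems, because the ω-map of a subsystem is a restriction of the
ω-map of `Z` and the characteristic polynomial of a restriction divides the original one.
Products of ℚ-DATS are ℚ-DATS, so these kernels are closed under intersection, and by finite
dimensionality there is a least one, `N`. The image of `T` in `V ⧸ N` is the reflection; its
universal property is that of the quotient map.
-/

section Charpoly

variable {K A B : Type*} [Field K] [AddCommGroup A] [Module K A] [FiniteDimensional K A]
  [AddCommGroup B] [Module K B] [FiniteDimensional K B]

theorem LinearMap.charpoly_restrict_dvd (f : Module.End K A) {q : Submodule K A}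
    (hq : ∀ x ∈ q, f x ∈ q) : (f.restrict hq).charpoly ∣ f.charpoly := by
  classical
  let bq := Free.chooseBasis K q
  let b := bq.sumQuot (Free.chooseBasis K (A ⧸ q))
  rw [← f.charpoly_toMatrix b]
  set M := LinearMap.toMatrix b b f
  have h₁₁ : M.toBlocks₁₁ = LinearMap.toMatrix bq bq (f.restrict hq) := by
    ext i j
    simp [M, b, Matrix.toBlocks₁₁, LinearMap.toMatrix_apply, LinearMap.restrict_apply,
      Basis.sumQuot_repr_inl_of_mem _ _ _ (hq _ (Submodule.coe_mem _))]
  have h₂₁ : M.toBlocks₂₁ = 0 := by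
    ext i j
    simp [M, b, Matrix.toBlocks₂₁, LinearMap.toMatrix_apply, Basis.sumQuot_repr_inr,
      (Submodule.Quotient.mk_eq_zero q).2 (hq _ (Submodule.coe_mem _))]
  rw [← M.fromBlocks_toBlocks, h₂₁, Matrix.charpoly_fromBlocks_zero₂₁, h₁₁,
    LinearMap.charpoly_toMatrix]
  exact dvd_mul_right _ _

theorem LinearMap.splits_charpoly_of_injective {f : Module.End K A} {g : Module.End K B}
    {e : B →ₗ[K] A} (he : Function.Injective e) (hcomm : e ∘ₗ g = f ∘ₗ e)
    (hf : f.charpoly.Splits) : g.charpoly.Splits := by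
  have hq : ∀ x ∈ LinearMap.range e, f x ∈ LinearMap.range e := by
    rintro _ ⟨y, rfl⟩
    exact ⟨g y, LinearMap.congr_fun hcomm y⟩
  let e' := LinearEquiv.ofInjective e he
  have hconj : e'.conj g = f.restrict hq := by
    ext x
    obtain ⟨y, rfl⟩ := e'.surjective x
    simp only [e', LinearEquiv.conj_apply]
    simpa [LinearMap.restrict_apply] using LinearMap.congr_fun hcomm y
  rw [← e'.charpoly_conj g, hconj]
  exact hf.of_dvd f.charpoly_monic.ne_zero (f.charpoly_restrict_dvd hq)

end Charpoly

def ProdRel {X₁ X₂ : Type} (Z₁ : Set (X₁ × X₁)) (Z₂ : Set (X₂ × X₂)) :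
    Set ((X₁ × X₂) × (X₁ × X₂)) :=
  {q | (q.1.1, q.2.1) ∈ Z₁ ∧ (q.1.2, q.2.2) ∈ Z₂}

section Relations

variable {U U' : Type}

theorem exists_step_mem_omegaDom {H : Set (U × U)} {x : U} (hx : x ∈ OmegaDom H) :
    ∃ y ∈ OmegaDom H, (x, y) ∈ H := by
  obtain ⟨u, rfl, hu⟩ := hx
  exact ⟨u 1, ⟨fun k => u (k + 1), rfl, fun k => hu (k + 1)⟩, hu 0⟩

theorem omegaDom_prodRel (H : Set (U × U)) (H' : Set (U' × U')) :
    OmegaDom (ProdRel H H') = OmegaDom H ×ˢ OmegaDom H' := by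
  ext x
  constructor
  · rintro ⟨u, rfl, hu⟩
    exact ⟨⟨fun k => (u k).1, rfl, fun k => (hu k).1⟩, ⟨fun k => (u k).2, rfl, fun k => (hu k).2⟩⟩
  · rintro ⟨⟨u, hu₀, hu⟩, ⟨v, hv₀, hv⟩⟩
    exact ⟨fun k => (u k, v k), Prod.ext hu₀ hv₀, fun k => ⟨hu k, hv k⟩⟩

theorem Deterministic.prodRel {H : Set (U × U)} {H' : Set (U' × U')} (hdet : Deterministic H)
    (hdet' : Deterministic H') : Deterministic (ProdRel H H') := by
  rintro _ _ _ ⟨h₁, h₁'⟩ ⟨h₂, h₂'⟩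
  exact Prod.ext (hdet _ _ _ h₁ h₂) (hdet' _ _ _ h₁' h₂')

end Relations

section AffineRelations

variable {V W : Type} [AddCommGroup V] [Module ℚ V] [AddCommGroup W] [Module ℚ W]

theorem homog_eq_setOf_mem_direction {A : AffineSubspace ℚ (V × V)} {x₀ x₀' : V}
    (h₀ : (x₀, x₀') ∈ A) :
    Homog A x₀ x₀' = {q | q.1.2 = q.2.2 ∧
      (q.1.1 - q.1.2 • x₀, q.2.1 - q.1.2 • x₀') ∈ A.direction} := by
  ext q
  refine and_congr_right fun _ => ?_
  rw [SetLike.mem_coe, ← AffineSubspace.vsub_right_mem_direction_iff_mem h₀]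
  congr! 1
  ext <;> simp [sub_smul] <;> abel

theorem isLinearRel_homog {R : Set (V × V)} (haff : IsAffineRel R) {x₀ x₀' : V}
    (h₀ : (x₀, x₀') ∈ R) : IsLinearRel (Homog R x₀ x₀') := by
  obtain ⟨A, rfl⟩ := haff
  let c : (V × ℚ) × (V × ℚ) →ₗ[ℚ] ℚ := LinearMap.snd ℚ V ℚ ∘ₗ LinearMap.fst ℚ _ _
  let c' : (V × ℚ) × (V × ℚ) →ₗ[ℚ] ℚ := LinearMap.snd ℚ V ℚ ∘ₗ LinearMap.snd ℚ _ _
  let Φ : (V × ℚ) × (V × ℚ) →ₗ[ℚ] V × V :=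
    (LinearMap.fst ℚ V ℚ ∘ₗ LinearMap.fst ℚ _ _ - LinearMap.toSpanSingleton ℚ V x₀ ∘ₗ c).prod
      (LinearMap.fst ℚ V ℚ ∘ₗ LinearMap.snd ℚ _ _ - LinearMap.toSpanSingleton ℚ V x₀' ∘ₗ c)
  refine ⟨LinearMap.ker (c - c') ⊓ A.direction.comap Φ, ?_⟩
  rw [homog_eq_setOf_mem_direction h₀]
  ext q
  simp [Φ, c, c', sub_eq_zero]

theorem homog_subset_homog {R : Set (V × V)} (haff : IsAffineRel R) {a b a' b' : V}
    (h : (a, b) ∈ R) (h' : (a', b') ∈ R) : Homog R a b ⊆ Homog R a' b' := by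
  obtain ⟨A, rfl⟩ := haff
  rw [homog_eq_setOf_mem_direction h, homog_eq_setOf_mem_direction h']
  rintro q ⟨hc, hq⟩
  refine ⟨hc, ?_⟩
  have hshift : (q.1.1 - q.1.2 • a', q.2.1 - q.1.2 • b')
      = (q.1.1 - q.1.2 • a, q.2.1 - q.1.2 • b) + q.1.2 • ((a, b) -ᵥ (a', b') : V × V) := by
    ext <;> simp [smul_sub]
  rw [hshift]
  exact A.direction.add_mem hq (A.direction.smul_mem _ (AffineSubspace.vsub_mem_direction h h'))

theorem homog_eq_homog {R : Set (V × V)} (haff : IsAffineRel R) {a b a' b' : V}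
    (h : (a, b) ∈ R) (h' : (a', b') ∈ R) : Homog R a b = Homog R a' b' :=
  (homog_subset_homog haff h h').antisymm (homog_subset_homog haff h' h)

theorem Deterministic.homog {R : Set (V × V)} (hdet : Deterministic R) (x₀ x₀' : V) :
    Deterministic (Homog R x₀ x₀') := by
  rintro _ _ _ ⟨hc₁, hm₁⟩ ⟨hc₂, hm₂⟩
  exact Prod.ext (add_right_cancel (hdet _ _ _ hm₁ hm₂)) (hc₁.symm.trans hc₂)

theorem Sim.homog {S : Set (V × V)} {Z : Set (W × W)} {ι : V →ₗ[ℚ] W} (hsim : Sim S Z ι)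
    (x₀ x₀' : V) :
    Sim (Homog S x₀ x₀') (Homog Z (ι x₀) (ι x₀')) (ι.prodMap LinearMap.id) := by
  rintro x x' ⟨hc, hm⟩
  refine ⟨hc, ?_⟩
  simpa using hsim _ _ hm

theorem IsAffineRel.prodRel {R : Set (V × V)} {S : Set (W × W)} (hR : IsAffineRel R)
    (hS : IsAffineRel S) : IsAffineRel (ProdRel R S) := by
  obtain ⟨A, rfl⟩ := hR
  obtain ⟨B, rfl⟩ := hS
  exact ⟨(A.prod B).comap (LinearEquiv.prodProdProdComm ℚ V W V W).toLinearMap.toAffineMap, rfl⟩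

end AffineRelations

section OmegaMap

variable {U U' : Type} [AddCommGroup U] [Module ℚ U] [AddCommGroup U'] [Module ℚ U']

def omegaDomSubmodule (P : Submodule ℚ (U × U)) : Submodule ℚ U where
  carrier := OmegaDom (P : Set (U × U))
  zero_mem' := ⟨0, rfl, fun _ => P.zero_mem⟩
  add_mem' := by
    rintro _ _ ⟨u, rfl, hu⟩ ⟨v, rfl, hv⟩
    exact ⟨u + v, rfl, fun k => P.add_mem (hu k) (hv k)⟩
  smul_mem' := by
    rintro c _ ⟨u, rfl, hu⟩
    exact ⟨c • u, rfl, fun k => P.smul_mem c (hu k)⟩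

theorem IsLinearRel.exists_omegaMap {H : Set (U × U)} (hlin : IsLinearRel H)
    (hdet : Deterministic H) :
    ∃ (p : Submodule ℚ U) (f : Module.End ℚ p),
      (p : Set U) = OmegaDom H ∧ ∀ x : p, ((x : U), (f x : U)) ∈ H := by
  obtain ⟨P, rfl⟩ := hlin
  let p := omegaDomSubmodule P
  choose g hg using fun x : p => exists_step_mem_omegaDom x.2
  let f : Module.End ℚ p :=
    { toFun x := ⟨g x, (hg x).1⟩
      map_add' x y := Subtype.ext <| hdet _ _ _ (hg (x + y)).2 (P.add_mem (hg x).2 (hg y).2)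
      map_smul' c x := Subtype.ext <| hdet _ _ _ (hg (c • x)).2 (P.smul_mem c (hg x).2) }
  exact ⟨p, f, rfl, fun x => (hg x).2⟩

theorem Sim.mem_omegaDom {H : Set (U × U)} {H' : Set (U' × U')} {ψ : U →ₗ[ℚ] U'}
    (hsim : Sim H H' ψ) {x : U} (hx : x ∈ OmegaDom H) : ψ x ∈ OmegaDom H' := by
  obtain ⟨u, rfl, hu⟩ := hx
  exact ⟨fun k => ψ (u k), rfl, fun k => hsim _ _ (hu k)⟩

end OmegaMap

section RationalSpectrum

variable {U U' : Type} [AddCommGroup U] [Module ℚ U] [FiniteDimensional ℚ U]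
  [AddCommGroup U'] [Module ℚ U'] [FiniteDimensional ℚ U']

theorem HasRationalSpectrum.of_injective_sim {H : Set (U × U)} {H' : Set (U' × U')}
    (hspec : HasRationalSpectrum H') (hlin : IsLinearRel H) (hdet : Deterministic H)
    (hdet' : Deterministic H') {ψ : U →ₗ[ℚ] U'} (hψ : Function.Injective ψ)
    (hsim : Sim H H' ψ) : HasRationalSpectrum H := by
  obtain ⟨p, f, hp, hf⟩ := hlin.exists_omegaMap hdet
  obtain ⟨p', f', hp', hf', hsplit⟩ := hspec
  have hmaps : ∀ x : p, ψ x ∈ p' := fun x => by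
    rw [← SetLike.mem_coe, hp']
    exact hsim.mem_omegaDom (hp ▸ x.2)
  let e : p →ₗ[ℚ] p' := (ψ ∘ₗ p.subtype).codRestrict p' hmaps
  have he : Function.Injective e := fun x y h => Subtype.ext (hψ (congrArg Subtype.val h))
  have hcomm : e ∘ₗ f = f' ∘ₗ e := by
    ext x
    exact hdet' _ _ _ (hsim _ _ (hf x)) (hf' (e x))
  exact ⟨p, f, hp, hf, LinearMap.splits_charpoly_of_injective he hcomm hsplit⟩

theorem HasRationalSpectrum.prodRel {H : Set (U × U)} {H' : Set (U' × U')}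
    (hspec : HasRationalSpectrum H) (hspec' : HasRationalSpectrum H') :
    HasRationalSpectrum (ProdRel H H') := by
  obtain ⟨p, f, hp, hf, hsplit⟩ := hspec
  obtain ⟨p', f', hp', hf', hsplit'⟩ := hspec'
  let E : (p × p') ≃ₗ[ℚ] p.prod p' :=
    { toFun x := ⟨(x.1, x.2), x.1.2, x.2.2⟩
      invFun y := (⟨y.1.1, y.2.1⟩, ⟨y.1.2, y.2.2⟩)
      map_add' _ _ := rfl
      map_smul' _ _ := rfl
      left_inv _ := rfl
      right_inv _ := rfl }
  refine ⟨p.prod p', E.conj (f.prodMap f'), ?_,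
    fun x => ⟨hf ⟨x.1.1, x.2.1⟩, hf' ⟨x.1.2, x.2.2⟩⟩, ?_⟩
  · rw [Submodule.prod_coe, hp, hp', omegaDom_prodRel]
  · rw [E.charpoly_conj, LinearMap.charpoly_prodMap]
    exact hsplit.mul hsplit'

theorem hasRationalSpectrum_of_finrank_le_one {H : Set (U × U)} (hlin : IsLinearRel H)
    (hdet : Deterministic H) (hU : Module.finrank ℚ U ≤ 1) : HasRationalSpectrum H := by
  obtain ⟨p, f, hp, hf⟩ := hlin.exists_omegaMap hdet
  refine ⟨p, f, hp, hf, Polynomial.Splits.of_natDegree_le_one ?_⟩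
  rw [f.charpoly_natDegree]
  exact p.finrank_le.trans hU

end RationalSpectrum

section QDATS

variable {V W : Type} [AddCommGroup V] [Module ℚ V] [FiniteDimensional ℚ V]
  [AddCommGroup W] [Module ℚ W] [FiniteDimensional ℚ W]

theorem isQDATS_of_forall_mem {R : Set (V × V)} (haff : IsAffineRel R) (hdet : Deterministic R)
    (hspec : ∀ t ∈ R, HasRationalSpectrum (Homog R t.1 t.2)) : IsQDATS R := by
  refine ⟨haff, hdet, R.eq_empty_or_nonempty.imp_right fun ⟨t, ht⟩ => ?_⟩
  exact ⟨t, ht, isLinearRel_homog haff ht, hdet.homog _ _, hspec t ht⟩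

theorem IsQDATS.hasRationalSpectrum_homog {R : Set (V × V)} (hR : IsQDATS R) {t : V × V}
    (ht : t ∈ R) : HasRationalSpectrum (Homog R t.1 t.2) := by
  obtain ⟨haff, -, hempty | ⟨t₀, ht₀, -, -, hspec⟩⟩ := hR
  · exact absurd ht (hempty ▸ Set.notMem_empty t)
  · rwa [homog_eq_homog haff ht₀ ht] at hspec

theorem isQDATS_univ : IsQDATS (Set.univ : Set (PUnit × PUnit)) := by
  have haff : IsAffineRel (Set.univ : Set (PUnit × PUnit)) := ⟨⊤, AffineSubspace.top_coe _ _ _⟩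
  have hdet : Deterministic (Set.univ : Set (PUnit × PUnit)) :=
    fun _ _ _ _ _ => Subsingleton.elim _ _
  refine isQDATS_of_forall_mem haff hdet fun t ht => ?_
  refine hasRationalSpectrum_of_finrank_le_one (isLinearRel_homog haff ht) (hdet.homog _ _) ?_
  rw [Module.finrank_prod, Module.finrank_self, Module.finrank_zero_of_subsingleton]

theorem IsQDATS.prodRel {R : Set (V × V)} {S : Set (W × W)} (hR : IsQDATS R) (hS : IsQDATS S) :
    IsQDATS (ProdRel R S) := by
  have hdet := hR.2.1.prodRel hS.2.1
  refine isQDATS_of_forall_mem (hR.1.prodRel hS.1) hdet fun t ht => ?_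
  -- The homogenization of a product embeds into the product of the homogenizations.
  let ψ : (V × W) × ℚ →ₗ[ℚ] (V × ℚ) × (W × ℚ) :=
    { toFun q := ((q.1.1, q.2), (q.1.2, q.2))
      map_add' _ _ := rfl
      map_smul' _ _ := rfl }
  have hψ : Function.Injective ψ := fun a b h => by
    simp only [ψ, LinearMap.coe_mk, AddHom.coe_mk, Prod.mk.injEq] at h
    exact Prod.ext (Prod.ext h.1.1 h.2.1) h.1.2
  refine (HasRationalSpectrum.prodRel (hR.hasRationalSpectrum_homog ht.1)
    (hS.hasRationalSpectrum_homog ht.2)).of_injective_sim (isLinearRel_homog (hR.1.prodRel hS.1)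
    ht) (hdet.homog _ _) ((hR.2.1.homog _ _).prodRel (hS.2.1.homog _ _)) hψ ?_
  rintro a b ⟨hc, hR', hS'⟩
  exact ⟨⟨hc, hR'⟩, ⟨hc, hS'⟩⟩

theorem IsQDATS.of_injective_sim {S : Set (V × V)} {Z : Set (W × W)} (hZ : IsQDATS Z)
    (hS : IsAffineRel S) {ι : V →ₗ[ℚ] W} (hι : Function.Injective ι) (hsim : Sim S Z ι) :
    IsQDATS S := by
  have hdet : Deterministic S := fun _ _ _ h₁ h₂ =>
    hι (hZ.2.1 _ _ _ (hsim _ _ h₁) (hsim _ _ h₂))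
  refine isQDATS_of_forall_mem hS hdet fun t ht => ?_
  exact (hZ.hasRationalSpectrum_homog (hsim _ _ ht)).of_injective_sim (isLinearRel_homog hS ht)
    (hdet.homog _ _) (hZ.2.1.homog _ _) (hι.prodMap Function.injective_id)
    (hsim.homog _ _)

end QDATS

theorem InfClosed.exists_isLeast {α : Type*} [SemilatticeInf α] [WellFoundedLT α] {s : Set α}
    (hs : InfClosed s) (hne : s.Nonempty) : ∃ a, IsLeast s a := by
  obtain ⟨a, ha, hmin⟩ := wellFounded_lt.has_min s hne
  exact ⟨a, ha, fun b hb => inf_eq_left.1 (inf_le_left.eq_of_not_lt (hmin _ (hs ha hb)))⟩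

section Reflection

variable {V : Type} [AddCommGroup V] [Module ℚ V]

def SimKernels (R : Set (V × V)) : Set (Submodule ℚ V) :=
  {N | ∃ (X : QVec) (Z : Set (X.carrier × X.carrier)) (t : V →ₗ[ℚ] X.carrier),
    IsQDATS Z ∧ Sim R Z t ∧ LinearMap.ker t = N}

theorem exists_isLeast_simKernels [FiniteDimensional ℚ V] (R : Set (V × V)) :
    ∃ N, IsLeast (SimKernels R) N := by
  refine InfClosed.exists_isLeast ?_ ⟨_, ⟨PUnit⟩, Set.univ, 0, isQDATS_univ,
    fun _ _ _ => Set.mem_univ _, rfl⟩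
  rintro _ ⟨X₁, Z₁, t₁, hZ₁, ht₁, rfl⟩ _ ⟨X₂, Z₂, t₂, hZ₂, ht₂, rfl⟩
  exact ⟨⟨X₁.carrier × X₂.carrier⟩, ProdRel Z₁ Z₂, t₁.prod t₂, hZ₁.prodRel hZ₂,
    fun x x' h => ⟨ht₁ x x' h, ht₂ x x' h⟩, LinearMap.ker_prod t₁ t₂⟩

def QuotRel (R : Set (V × V)) (N : Submodule ℚ V) : Set ((V ⧸ N) × (V ⧸ N)) :=
  Prod.map N.mkQ N.mkQ '' R

variable {R : Set (V × V)} {N : Submodule ℚ V}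

theorem IsAffineRel.quotRel (haff : IsAffineRel R) : IsAffineRel (QuotRel R N) := by
  obtain ⟨A, rfl⟩ := haff
  exact ⟨A.map (N.mkQ.prodMap N.mkQ).toAffineMap, AffineSubspace.coe_map _ _⟩

theorem sim_mkQ_quotRel : Sim R (QuotRel R N) N.mkQ :=
  fun x x' h => ⟨(x, x'), h, rfl⟩

theorem Sim.liftQ_quotRel {X : Type} [AddCommGroup X] [Module ℚ X] {Z : Set (X × X)}
    {t : V →ₗ[ℚ] X} (ht : Sim R Z t) (hN : N ≤ LinearMap.ker t) :
    Sim (QuotRel R N) Z (N.liftQ t hN) := by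
  rintro _ _ ⟨⟨x, x'⟩, hx, ⟨⟩⟩
  exact ht x x' hx

end Reflection

theorem qdats_reflection_general
    (V : Type) [AddCommGroup V] [Module ℚ V] [FiniteDimensional ℚ V]
    (R : Set (V × V)) (haff : IsAffineRel R) :
    ∃ (W : QVec) (S : Set (W.carrier × W.carrier)) (s : V →ₗ[ℚ] W.carrier),
      IsQDATS S ∧ Sim R S s ∧
      ∀ (X : QVec) (Z : Set (X.carrier × X.carrier)), IsQDATS Z →
        ∀ t : V →ₗ[ℚ] X.carrier, Sim R Z t →
          ∃! tbar : W.carrier →ₗ[ℚ] X.carrier, Sim S Z tbar ∧ tbar ∘ₗ s = t := by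
  obtain ⟨_, ⟨X, Z, t, hZ, ht, rfl⟩, hleast⟩ := exists_isLeast_simKernels R
  let N := LinearMap.ker t
  have hι : Function.Injective (N.liftQ t le_rfl) :=
    LinearMap.ker_eq_bot.1 (N.ker_liftQ_eq_bot t le_rfl le_rfl)
  refine ⟨⟨V ⧸ N⟩, QuotRel R N, N.mkQ, hZ.of_injective_sim haff.quotRel hι (ht.liftQ_quotRel _),
    sim_mkQ_quotRel, fun X' Z' hZ' t' ht' => ?_⟩
  have hN : N ≤ LinearMap.ker t' := hleast ⟨X', Z', t', hZ', ht', rfl⟩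
  refine ⟨N.liftQ t' hN, ⟨ht'.liftQ_quotRel hN, N.liftQ_mkQ t' hN⟩, fun g ⟨_, hg⟩ => ?_⟩
  exact N.linearMap_qext (hg.trans (N.liftQ_mkQ t' hN).symm)

/-- every deterministic affine transition system has a ℚ-DATS-reflection. -/
theorem qdats_reflection
    (V : Type) [AddCommGroup V] [Module ℚ V] [FiniteDimensional ℚ V]
    (R : Set (V × V)) (haff : IsAffineRel R) (hdet : Deterministic R) :
    ∃ (W : QVec) (S : Set (W.carrier × W.carrier)) (s : V →ₗ[ℚ] W.carrier),
      IsQDATS S ∧ Sim R S s ∧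
      ∀ (X : QVec) (Z : Set (X.carrier × X.carrier)), IsQDATS Z →
        ∀ t : V →ₗ[ℚ] X.carrier, Sim R Z t →
          ∃! tbar : W.carrier →ₗ[ℚ] X.carrier, Sim S Z tbar ∧ tbar ∘ₗ s = t :=
  qdats_reflection_general V R haff
end

section
/- Let T₀ be the transition system on the one-dimensional ℚ-vector space ℚ whose relation is {(0,0)}. There do not exist a finite-dimensional ℚ-vector space W, a ℚ-linear map g : W → W, a vector b ∈ W, and a ℚ-linear map s : ℚ → W with g(s(0)) + b = s(0), such that for every finite-dimensional ℚ-vector space U, every ℚ-linear map h : U → U, every b′ ∈ U, and every ℚ-linear map t : ℚ → U with h(t(0)) + b′ = t(0), there exists a unique ℚ-linear map t̄ : W → U satisfying t̄ ∘ s = t and t̄(g(x) + b) = h(t̄(x)) + b′ for all x ∈ W. (I.e., T₀ has no reflection in the category of total deterministic affine transition systems.) -/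
/-!
Since `s` is linear, `s 0 = 0`, so the fixed-point condition forces `b = 0`. For every `c : ℚ`
the system `x ↦ c • x` on `ℚ`, with `t = id`, is an admissible target, and the factorisation
through `s` yields a functional `φ` on `W` with `φ ∘ s = id` (so `φ ≠ 0`) and `φ ∘ g = c • φ`:
an eigenvector of the transpose of `g` for the eigenvalue `c`. But an endomorphism of a
finite-dimensional space has only finitely many eigenvalues, and `ℚ` is infinite.
-/

open Module

namespace Module.End

variable {K V : Type*} [Field K] [AddCommGroup V] [Module K V]

theorem exists_not_hasEigenvalue [Infinite K] [FiniteDimensional K V] (f : End K V) :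
    ∃ μ : K, ¬ f.HasEigenvalue μ :=
  f.finite_hasEigenvalue.exists_notMem

theorem dualMap_hasEigenvalue_of_comp_eq_smul {g : End K V} {φ : Dual K V} {c : K}
    (hφ : φ ≠ 0) (hφg : φ ∘ₗ g = c • φ) : HasEigenvalue g.dualMap c :=
  hasEigenvalue_of_hasEigenvector ⟨mem_eigenspace_iff.mpr hφg, hφ⟩

end Module.End

/-- the transition system `{(0,0)}` on ℚ has no reflection in the
category of total deterministic affine transition systems (graphs of affine maps). -/
theorem no_tdats_reflection :
    ¬ ∃ (W : QVec) (g : W.carrier →ₗ[ℚ] W.carrier) (b : W.carrier)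
        (s : ℚ →ₗ[ℚ] W.carrier),
        g (s 0) + b = s 0 ∧
        ∀ (U : QVec) (h : U.carrier →ₗ[ℚ] U.carrier) (b' : U.carrier)
          (t : ℚ →ₗ[ℚ] U.carrier),
          h (t 0) + b' = t 0 →
          ∃! tbar : W.carrier →ₗ[ℚ] U.carrier,
            tbar ∘ₗ s = t ∧ ∀ x : W.carrier, tbar (g x + b) = h (tbar x) + b' := by
  rintro ⟨W, g, b, s, hfix, hrefl⟩
  have hb : b = 0 := by simpa using hfix
  obtain ⟨c, hc⟩ := Module.End.exists_not_hasEigenvalue g.dualMap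
  obtain ⟨φ, ⟨hφs, hφg⟩, -⟩ := hrefl ⟨ℚ⟩ (c • LinearMap.id) 0 LinearMap.id (by simp)
  refine hc (Module.End.dualMap_hasEigenvalue_of_comp_eq_smul (φ := φ) ?_ ?_)
  · rintro rfl
    simpa using LinearMap.congr_fun hφs 1
  · ext x
    simpa [hb] using hφg x
end

section
/- Let V and W be finite-dimensional ℚ-vector spaces, let R ⊆ V × V be any set, let S be an affine subspace of W × W, and let s : V → W be a ℚ-linear map such that (s x, s x′) ∈ S for every (x,x′) ∈ R. Then (s y, s y′) ∈ S for every (y,y′) in the affine span (over ℚ) of R. Consequently, the affine hull of R, together with the identity simulation, is a best affine abstraction of the transition system (V,R): every linear simulation from (V,R) to an affine transition system is also a linear simulation from (V, affineSpan R) to that system. -/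
open Module

section Simulation

variable {V W : Type} [AddCommGroup V] [Module ℚ V] [AddCommGroup W] [Module ℚ W]

theorem sim_affineSpan {R : Set (V × V)} {S : AffineSubspace ℚ (W × W)} {s : V →ₗ[ℚ] W}
    (h : Sim R S s) : Sim (affineSpan ℚ R : Set (V × V)) S s := by
  have hspan : affineSpan ℚ R ≤ S.comap (s.prodMap s).toAffineMap :=
    affineSpan_le.mpr fun p hp => h p.1 p.2 hp
  exact fun y y' hy => hspan hy

end Simulation

theorem affine_hull_best_abstraction_general
    (V W : Type) [AddCommGroup V] [Module ℚ V]
    [AddCommGroup W] [Module ℚ W]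
    (R : Set (V × V)) (S : AffineSubspace ℚ (W × W)) (s : V →ₗ[ℚ] W)
    (hsim : ∀ x x' : V, (x, x') ∈ R → (s x, s x') ∈ S) :
    ∀ y y' : V, (y, y') ∈ affineSpan ℚ R → (s y, s y') ∈ S :=
  sim_affineSpan hsim

/-- a linear simulation into an affine transition system extends from
`R` to the affine span of `R`; i.e. the affine hull is a best affine abstraction. -/
theorem affine_hull_best_abstraction
    (V W : Type) [AddCommGroup V] [Module ℚ V] [FiniteDimensional ℚ V]
    [AddCommGroup W] [Module ℚ W] [FiniteDimensional ℚ W]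
    (R : Set (V × V)) (S : AffineSubspace ℚ (W × W)) (s : V →ₗ[ℚ] W)
    (hsim : ∀ x x' : V, (x, x') ∈ R → (s x, s x') ∈ S) :
    ∀ y y' : V, (y, y') ∈ affineSpan ℚ R → (s y, s y') ∈ S :=
  affine_hull_best_abstraction_general V W R S s hsim
end

section
/- (Dual space simulation) Let V be a finite-dimensional ℚ-vector space, R ⊆ V × V a relation, and Λ a ℚ-linear subspace of the dual space V* = Module.Dual ℚ V. Let (U,s) = α_Λ((V,R)), i.e., s : V → Λ* sends x to the evaluation functional f ↦ f(x) and U is the transition system on Λ* with relation s[R] = {(s x, s x′) : (x,x′) ∈ R}. Suppose Z = (W,S) is a transition system on a finite-dimensional ℚ-vector space W and z : V → W is a linear simulation from (V,R) to Z such that for every g ∈ W*, the functional g ∘ z belongs to Λ. Then there exists a unique ℚ-linear map z̄ : Λ* → W such that z̄ ∘ s = z and z̄ is a linear simulation from U to Z. -/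
open Module

/-!
The evaluation map `s : V → Λ*` is onto because `V` is finite-dimensional, and its kernel is the
common kernel of the functionals in `Λ`. Since every `g ∘ z` lies in `Λ`, a vector killed by `Λ`
is killed by every functional on `W`, hence by `z`; so `z` factors through `s`, uniquely because
`s` is onto. The factor is a simulation for `s[R]` because every transition of `s[R]` is the image
of one of `R`.
-/

theorem LinearMap.exists_comp_eq_of_surjective_of_ker_le {R M N P : Type*} [Ring R]
    [AddCommGroup M] [Module R M] [AddCommGroup N] [Module R N] [AddCommGroup P] [Module R P]
    {f : M →ₗ[R] N} (hf : Function.Surjective f) {g : M →ₗ[R] P}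
    (hker : LinearMap.ker f ≤ LinearMap.ker g) : ∃ h : N →ₗ[R] P, h ∘ₗ f = g :=
  ⟨(LinearMap.ker f).liftQ g hker ∘ₗ (f.quotKerEquivOfSurjective hf).symm.toLinearMap,
    LinearMap.ext fun x ↦ by
      change (LinearMap.ker f).liftQ g hker ((f.quotKerEquivOfSurjective hf).symm (f x)) = g x
      rw [← f.quotKerEquivOfSurjective_apply_mk hf x, LinearEquiv.symm_apply_apply]
      rfl⟩

theorem Submodule.dualCoannihilator_le_ker_of_comp_mem {K V W : Type*} [Field K]
    [AddCommGroup V] [Module K V] [AddCommGroup W] [Module K W]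
    {Λ : Submodule K (Module.Dual K V)} {z : V →ₗ[K] W}
    (hrange : ∀ g : Module.Dual K W, g ∘ₗ z ∈ Λ) : Λ.dualCoannihilator ≤ LinearMap.ker z :=
  fun x hx ↦ (Module.forall_dual_apply_eq_zero_iff K (z x)).1 fun g ↦
    (Submodule.mem_dualCoannihilator x).1 hx _ (hrange g)

theorem Sim.image_of_comp_eq {V W X : Type} [AddCommGroup V] [Module ℚ V]
    [AddCommGroup W] [Module ℚ W] [AddCommGroup X] [Module ℚ X]
    {R : Set (V × V)} {S : Set (W × W)} {z : V →ₗ[ℚ] W} (hz : Sim R S z)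
    {s : V →ₗ[ℚ] X} {zbar : X →ₗ[ℚ] W} (hfact : zbar ∘ₗ s = z) :
    Sim ((fun p : V × V ↦ (s p.1, s p.2)) '' R) S zbar := by
  rintro _ _ ⟨⟨x, x'⟩, hxx', hs⟩
  cases hs
  simpa only [← LinearMap.comp_apply, hfact] using hz x x' hxx'

section evalIn

variable {V : Type} [AddCommGroup V] [Module ℚ V] (Λ : Submodule ℚ (Module.Dual ℚ V))

theorem ker_evalIn : LinearMap.ker (evalIn Λ) = Λ.dualCoannihilator := by
  ext x
  simp only [LinearMap.mem_ker, Submodule.mem_dualCoannihilator, LinearMap.ext_iff]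
  simp [evalIn]

theorem evalIn_surjective [FiniteDimensional ℚ V] : Function.Surjective (evalIn Λ) :=
  (Λ.subtype.dualMap_surjective_of_injective Λ.injective_subtype).comp
    (Module.evalEquiv ℚ V).surjective

end evalIn

theorem dual_space_simulation_general
    (V W : Type) [AddCommGroup V] [Module ℚ V] [FiniteDimensional ℚ V]
    [AddCommGroup W] [Module ℚ W]
    (R : Set (V × V)) (Λ : Submodule ℚ (Module.Dual ℚ V))
    (S : Set (W × W)) (z : V →ₗ[ℚ] W)
    (hzsim : Sim R S z)
    (hrange : ∀ g : Module.Dual ℚ W, g ∘ₗ z ∈ Λ) :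
    ∃! zbar : Module.Dual ℚ Λ →ₗ[ℚ] W,
      zbar ∘ₗ evalIn Λ = z ∧ Sim (ImageRel R Λ) S zbar := by
  obtain ⟨zbar, hfact⟩ := LinearMap.exists_comp_eq_of_surjective_of_ker_le (evalIn_surjective Λ)
    ((ker_evalIn Λ).trans_le (Submodule.dualCoannihilator_le_ker_of_comp_mem hrange))
  exact ⟨zbar, ⟨hfact, hzsim.image_of_comp_eq hfact⟩, fun y hy ↦
    (LinearMap.cancel_right (evalIn_surjective Λ)).1 (hy.1.trans hfact.symm)⟩

/-- Dual space simulation: if `z : T → Z` is a linear simulation whose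
dual range is contained in `Λ`, then `z` factors uniquely through `α_Λ(T)`. -/
theorem dual_space_simulation
    (V W : Type) [AddCommGroup V] [Module ℚ V] [FiniteDimensional ℚ V]
    [AddCommGroup W] [Module ℚ W] [FiniteDimensional ℚ W]
    (R : Set (V × V)) (Λ : Submodule ℚ (Module.Dual ℚ V))
    (S : Set (W × W)) (z : V →ₗ[ℚ] W)
    (hzsim : Sim R S z)
    (hrange : ∀ g : Module.Dual ℚ W, g ∘ₗ z ∈ Λ) :
    ∃! zbar : Module.Dual ℚ Λ →ₗ[ℚ] W,
      zbar ∘ₗ evalIn Λ = z ∧ Sim (ImageRel R Λ) S zbar :=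
  dual_space_simulation_general V W R Λ S z hzsim hrange
end

section
/- Let A, B be m × n matrices over ℚ, c ∈ ℚ^m, M a p × n matrix over ℚ, and suppose the relation R = {(x,x′) ∈ ℚ^n × ℚ^n : A·x′ = B·x + c} is nonempty. Then for every f ∈ ℚ^n, the following are equivalent: (1) for all x₁,x₂,x₁′,x₂′ ∈ ℚ^n with A·x₁′ = B·x₁ + c, A·x₂′ = B·x₂ + c, and vᵀx₁ = vᵀx₂ for every v ∈ ℚ^n with M·v = 0, one has fᵀx₁′ = fᵀx₂′; (2) there exists y ∈ ℚ^m with M·(Bᵀ·y) = 0 and Aᵀ·y = f. (This is the paper's closed-form computation of Det(T,Λ) for an affine transition system T = (ℚ^n, R) and Λ = {v : M·v = 0}.) -/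
open Module

/-!
If `f = Aᵀ y` then along any transition `f ⬝ᵥ x' = y ⬝ᵥ A x' = (Bᵀ y) ⬝ᵥ x + y ⬝ᵥ c`, and
`M (Bᵀ y) = 0` says that `Bᵀ y ∈ Λ`, so `f ⬝ᵥ x'` only depends on the `Λ`-class of `x`.

Conversely, shifting a transition `(x₀, x₀')` by `(Mᵀ w, d)` with `A d = B Mᵀ w` gives another
transition whose source is `Λ`-equivalent to `x₀`, since `Mᵀ w` is orthogonal to `ker M`.
Determinism then forces `f ⬝ᵥ d = 0` on the kernel of the block matrix `[A | -B Mᵀ]`, and by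
the Fredholm alternative `(f, 0)` lies in its row space, which is the required `y`.
-/

open Matrix

section Fredholm

variable {K ι κ μ : Type*} [Field K] [Fintype ι] [Fintype κ] [Fintype μ]

theorem Matrix.exists_vecMul_eq_of_mulVec_eq_zero (N : Matrix ι κ K) (g : κ → K)
    (h : ∀ z, N *ᵥ z = 0 → g ⬝ᵥ z = 0) : ∃ y, y ᵥ* N = g := by
  classical
  have hg : dotProductEquiv K κ g ∈ LinearMap.range N.mulVecLin.dualMap := by
    rw [LinearMap.range_dualMap_eq_dualAnnihilator_ker, Submodule.mem_dualAnnihilator]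
    exact h
  obtain ⟨ψ, hψ⟩ := hg
  refine ⟨(dotProductEquiv K ι).symm ψ, dotProduct_eq _ _ fun z => ?_⟩
  rw [← dotProduct_mulVec, ← dotProductEquiv_apply_apply, LinearEquiv.apply_symm_apply]
  simpa using LinearMap.congr_fun hψ z

theorem Matrix.exists_vecMul_eq_and_vecMul_eq_zero (A : Matrix ι κ K) (C : Matrix ι μ K)
    (f : κ → K) (h : ∀ d w, A *ᵥ d = C *ᵥ w → f ⬝ᵥ d = 0) :
    ∃ y, y ᵥ* A = f ∧ y ᵥ* C = 0 := by
  obtain ⟨y, hy⟩ := (fromCols A (-C)).exists_vecMul_eq_of_mulVec_eq_zero (Sum.elim f 0)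
    fun z hz => by
      rw [fromCols_mulVec, neg_mulVec, ← sub_eq_add_neg, sub_eq_zero] at hz
      simpa [dotProduct, Fintype.sum_sum_type] using h _ _ hz
  rw [vecMul_fromCols, vecMul_neg, Sum.elim_eq_iff, neg_eq_zero] at hy
  exact ⟨y, hy⟩

end Fredholm

section AffineTransitions

variable {K ι κ μ : Type*} [CommRing K] [Fintype ι] [Fintype κ] [Fintype μ]

theorem Matrix.dotProduct_transpose_mulVec_eq_zero {M : Matrix μ κ K} {v : κ → K}
    (hv : M *ᵥ v = 0) (w : μ → K) : v ⬝ᵥ (Mᵀ *ᵥ w) = 0 := by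
  rw [dotProduct_mulVec, vecMul_transpose, hv, zero_dotProduct]

theorem Matrix.dotProduct_eq_of_mulVec_eq_add {A B : Matrix ι κ K} {c : ι → K} {x x' : κ → K}
    (hx : A *ᵥ x' = B *ᵥ x + c) (y : ι → K) :
    (Aᵀ *ᵥ y) ⬝ᵥ x' = (Bᵀ *ᵥ y) ⬝ᵥ x + y ⬝ᵥ c := by
  rw [mulVec_transpose, ← dotProduct_mulVec, hx, dotProduct_add, dotProduct_mulVec,
    mulVec_transpose]

end AffineTransitions

open Matrix in
/-- closed-form computation of `Det(T, Λ)` for an affine transition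
system `R = {(x,x') : A x' = B x + c}` and `Λ = {v : M v = 0}`. -/
theorem detSet_closed_form
    (m n p : ℕ)
    (A B : Matrix (Fin m) (Fin n) ℚ) (c : Fin m → ℚ)
    (M : Matrix (Fin p) (Fin n) ℚ)
    (hne : ∃ x x' : Fin n → ℚ, A.mulVec x' = B.mulVec x + c)
    (f : Fin n → ℚ) :
    (∀ x₁ x₂ x₁' x₂' : Fin n → ℚ,
        A.mulVec x₁' = B.mulVec x₁ + c →
        A.mulVec x₂' = B.mulVec x₂ + c →
        (∀ v : Fin n → ℚ, M.mulVec v = 0 → v ⬝ᵥ x₁ = v ⬝ᵥ x₂) →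
        f ⬝ᵥ x₁' = f ⬝ᵥ x₂') ↔
    (∃ y : Fin m → ℚ, M.mulVec (B.transpose.mulVec y) = 0 ∧ A.transpose.mulVec y = f) := by
  constructor
  · intro hdet
    obtain ⟨x₀, x₀', h₀⟩ := hne
    have hker : ∀ d w, A *ᵥ d = (B * Mᵀ) *ᵥ w → f ⬝ᵥ d = 0 := by
      intro d w hd
      have hshift : A *ᵥ (x₀' + d) = B *ᵥ (x₀ + Mᵀ *ᵥ w) + c := by
        rw [mulVec_add, mulVec_add, h₀, hd, mulVec_mulVec]
        abel
      have hdet_shift := hdet _ _ _ _ hshift h₀ fun v hv => by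
        rw [dotProduct_add, dotProduct_transpose_mulVec_eq_zero hv, add_zero]
      simpa [dotProduct_add] using hdet_shift
    obtain ⟨y, hyA, hyC⟩ := exists_vecMul_eq_and_vecMul_eq_zero A (B * Mᵀ) f hker
    refine ⟨y, ?_, by rw [mulVec_transpose, hyA]⟩
    rw [mulVec_transpose, ← vecMul_transpose, vecMul_vecMul, hyC]
  · rintro ⟨y, hM, rfl⟩ x₁ x₂ x₁' x₂' h₁ h₂ hΛ
    rw [dotProduct_eq_of_mulVec_eq_add h₁, dotProduct_eq_of_mulVec_eq_add h₂, hΛ _ hM]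
end

section
/- Let T = (V,R) be a deterministic linear transition system on a finite-dimensional ℚ-vector space V, let U = (W,S) be a deterministic linear transition system with rational spectrum on a finite-dimensional ℚ-vector space W, and let s : V → W be a linear simulation from T to U. Then for every functional g ∈ W* = Module.Dual ℚ W, the functional g ∘ s belongs to the generalized rational eigenspace E_ℚ(T). -/
open Module

/-!
Restricted to the ω-domains, the simulation `s` intertwines `T|_ω` with `U|_ω`, so by
Cayley–Hamilton the characteristic polynomial `χ` of `U|_ω`, evaluated at `T|_ω`, maps
`dom^ω(T)` into `ker s`. Thus the restriction of `g ∘ s` to `dom^ω(T)` is killed by `χ` of the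
transpose of `T|_ω`. Since `χ` splits over ℚ, it is a product of pairwise coprime powers
`(X - μ)^m`, so that kernel is a sum of generalized eigenspaces of the transpose for rational
eigenvalues; and `E_ℚ(T)` consists exactly of the functionals whose restriction to `dom^ω(T)`
lies in such a sum.
-/

open Polynomial

section Polynomial

variable {R M N : Type*} [CommRing R] [AddCommGroup M] [Module R M] [AddCommGroup N] [Module R N]

theorem LinearMap.comp_aeval_eq_aeval_comp {σ : M →ₗ[R] N} {f : Module.End R M}
    {h : Module.End R N} (hσ : σ ∘ₗ f = h ∘ₗ σ) (P : R[X]) :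
    σ ∘ₗ aeval f P = aeval h P ∘ₗ σ := by
  induction P using Polynomial.induction_on' with
  | add P Q hP hQ => simp only [map_add, LinearMap.comp_add, LinearMap.add_comp, hP, hQ]
  | monomial n c =>
    simp only [aeval_monomial, ← Algebra.smul_def, LinearMap.comp_smul, LinearMap.smul_comp,
      Module.End.commute_pow_left_of_commute hσ.symm]

theorem LinearMap.dualMap_pow (f : Module.End R M) (n : ℕ) :
    (f ^ n).dualMap = f.dualMap ^ n := by
  induction n with
  | zero => exact LinearMap.dualMap_id
  | succ n ih => rw [pow_succ, pow_succ', Module.End.mul_eq_comp, Module.End.mul_eq_comp, ← ih,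
      LinearMap.dualMap_comp_dualMap]

theorem LinearMap.dualMap_aeval (f : Module.End R M) (P : R[X]) :
    (aeval f P).dualMap = aeval f.dualMap P := by
  induction P using Polynomial.induction_on' with
  | add P Q hP hQ => ext; simp [← hP, ← hQ]
  | monomial n c =>
    ext; simp [aeval_monomial, ← Algebra.smul_def, ← LinearMap.dualMap_pow]

theorem LinearMap.ker_aeval_prod {ι : Type*} (f : Module.End R M) (s : Finset ι) (P : ι → R[X])
    (hP : (s : Set ι).Pairwise fun i j => IsCoprime (P i) (P j)) :
    LinearMap.ker (aeval f (∏ i ∈ s, P i)) = ⨆ i ∈ s, LinearMap.ker (aeval f (P i)) := by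
  classical
  induction s using Finset.induction_on with
  | empty => simp [Module.End.one_eq_id]
  | insert a s ha ih =>
    have hcop : IsCoprime (P a) (∏ i ∈ s, P i) :=
      IsCoprime.prod_right fun i hi => hP (by simp) (by simp [hi]) (ne_of_mem_of_not_mem hi ha).symm
    rw [Finset.prod_insert ha, ← sup_ker_aeval_eq_ker_aeval_mul_of_coprime f hcop,
      ih (hP.mono (by simp)), Finset.iSup_insert]

end Polynomial

section Eigenspace

variable {K M : Type*} [Field K] [AddCommGroup M] [Module K M]

theorem Module.End.ker_aeval_le_iSup_maxGenEigenspace_of_splits (f : Module.End K M) {P : K[X]}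
    (hmonic : P.Monic) (hsplits : P.Splits) :
    LinearMap.ker (aeval f P) ≤ ⨆ μ, f.maxGenEigenspace μ := by
  classical
  rw [hsplits.eq_prod_roots_of_monic hmonic, Finset.prod_multiset_map_count,
    LinearMap.ker_aeval_prod]
  · refine iSup₂_le fun μ _ => ?_
    have hker : LinearMap.ker (aeval f ((X - C μ) ^ P.roots.count μ)) =
        f.genEigenspace μ (P.roots.count μ) := by
      simp [Module.End.genEigenspace_nat, Algebra.algebraMap_eq_smul_one]
    exact hker ▸ (Module.End.genEigenspace_le_maximal f μ _).trans (le_iSup _ μ)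
  · intro a _ b _ hab
    exact (isCoprime_X_sub_C_of_isUnit_sub (sub_ne_zero.2 hab).isUnit).pow

end Eigenspace

section Rational

variable {V : Type} [AddCommGroup V] [Module ℚ V]

theorem span_genRatEigenSet (p : Submodule ℚ V) (f : Module.End ℚ p) :
    Submodule.span ℚ (GenRatEigenSet p f) =
      (⨆ μ, Module.End.maxGenEigenspace f.dualMap μ).comap p.subtype.dualMap := by
  have hpow (μ : ℚ) (r : ℕ) : (f.dualMap - μ • 1) ^ r = ((f - μ • 1) ^ r).dualMap := by
    rw [LinearMap.dualMap_pow]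
    congr 1
    ext
    simp
  have hset : GenRatEigenSet p f = p.subtype.dualMap ⁻¹'
      ⋃ μ, (Module.End.maxGenEigenspace f.dualMap μ : Set (Module.Dual ℚ p)) := by
    ext φ
    simp only [GenRatEigenSet, Set.mem_ofPred_eq, Set.mem_preimage, Set.mem_iUnion,
      SetLike.mem_coe, Module.End.mem_maxGenEigenspace, hpow, LinearMap.ext_iff,
      LinearMap.dualMap_apply, LinearMap.zero_apply, Submodule.subtype_apply]
    constructor
    · rintro ⟨μ, r, -, h⟩
      exact ⟨μ, r, h⟩
    · rintro ⟨μ, k, h⟩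
      refine ⟨μ, k + 1, by omega, fun x => ?_⟩
      rw [pow_succ, Module.End.mul_apply]
      exact h _
  rw [hset, Submodule.iSup_eq_span, Submodule.span_preimage_eq]
  · exact ⟨0, Set.mem_iUnion.2 ⟨0, Submodule.zero_mem _⟩⟩
  · rw [LinearMap.range_eq_top.2 (LinearMap.dualMap_surjective_of_injective p.injective_subtype)]
    exact Set.subset_univ _

end Rational

section TransitionSystem

variable {V W : Type} [AddCommGroup V] [Module ℚ V] [AddCommGroup W] [Module ℚ W]
  {R : Set (V × V)} {S : Set (W × W)} {s : V →ₗ[ℚ] W}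

theorem Sim.mapsTo_omegaDom (hsim : Sim R S s) : Set.MapsTo s (OmegaDom R) (OmegaDom S) :=
  fun _ ⟨u, hu0, hu⟩ => ⟨fun k => s (u k), congrArg s hu0, fun k => hsim _ _ (hu k)⟩

theorem Sim.comp_eq_comp_of_deterministic (hsim : Sim R S s) (hSdet : Deterministic S)
    {p : Submodule ℚ V} {f : Module.End ℚ p} (hf : ∀ x : p, ((x : V), (f x : V)) ∈ R)
    {q : Submodule ℚ W} {h : Module.End ℚ q} (hh : ∀ y : q, ((y : W), (h y : W)) ∈ S)
    {σ : p →ₗ[ℚ] q} (hσ : ∀ x, (σ x : W) = s x) :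
    σ ∘ₗ f = h ∘ₗ σ := by
  ext x
  have hstep := hh (σ x)
  rw [hσ] at hstep
  simpa [hσ] using hSdet _ _ _ (hsim _ _ (hf x)) hstep

end TransitionSystem

theorem dual_functional_mem_genRatEigenspace_general
    (V W : Type) [AddCommGroup V] [Module ℚ V]
    [AddCommGroup W] [Module ℚ W] [FiniteDimensional ℚ W]
    (R : Set (V × V)) (S : Set (W × W))
    (hSdet : Deterministic S)
    (hSspec : HasRationalSpectrum S)
    (s : V →ₗ[ℚ] W) (hsim : Sim R S s)
    (p : Submodule ℚ V) (hp : (p : Set V) = OmegaDom R)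
    (f : Module.End ℚ p) (hf : ∀ x : p, ((x : V), (f x : V)) ∈ R)
    (g : Module.Dual ℚ W) :
    g ∘ₗ s ∈ Submodule.span ℚ (GenRatEigenSet p f) := by
  obtain ⟨q, h, hq, hh, hsplits⟩ := hSspec
  let σ : p →ₗ[ℚ] q := (s ∘ₗ p.subtype).codRestrict q fun x => by
    rw [← SetLike.mem_coe, hq]
    exact hsim.mapsTo_omegaDom (hp ▸ x.2)
  have hσ : σ ∘ₗ f = h ∘ₗ σ :=
    hsim.comp_eq_comp_of_deterministic hSdet hf hh fun _ => rfl
  rw [span_genRatEigenSet, Submodule.mem_comap]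
  refine Module.End.ker_aeval_le_iSup_maxGenEigenspace_of_splits f.dualMap h.charpoly_monic
    hsplits ?_
  rw [LinearMap.mem_ker, ← LinearMap.dualMap_aeval]
  ext x
  have hχ : σ (aeval f h.charpoly x) = 0 := by
    rw [← LinearMap.comp_apply, LinearMap.comp_aeval_eq_aeval_comp hσ, LinearMap.comp_apply,
      LinearMap.aeval_self_charpoly, LinearMap.zero_apply]
  simpa [σ] using congrArg (fun y : q => g y) hχ

/-- if `s` is a linear simulation from a deterministic linear transition
system `T` to a deterministic linear transition system `U` with rational spectrum,
then for every `g ∈ W*` the functional `g ∘ s` lies in the generalized rational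
eigenspace `E_ℚ(T)`. -/
theorem dual_functional_mem_genRatEigenspace
    (V W : Type) [AddCommGroup V] [Module ℚ V] [FiniteDimensional ℚ V]
    [AddCommGroup W] [Module ℚ W] [FiniteDimensional ℚ W]
    (R : Set (V × V)) (S : Set (W × W))
    (hRlin : IsLinearRel R) (hRdet : Deterministic R)
    (hSlin : IsLinearRel S) (hSdet : Deterministic S)
    (hSspec : HasRationalSpectrum S)
    (s : V →ₗ[ℚ] W) (hsim : Sim R S s)
    (p : Submodule ℚ V) (hp : (p : Set V) = OmegaDom R)
    (f : Module.End ℚ p) (hf : ∀ x : p, ((x : V), (f x : V)) ∈ R)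
    (g : Module.Dual ℚ W) :
    g ∘ₗ s ∈ Submodule.span ℚ (GenRatEigenSet p f) :=
  dual_functional_mem_genRatEigenspace_general V W R S hSdet hSspec s hsim p hp f hf g
end

section
/- (Correctness of dominant term analysis) Let m ≥ 1, let λ₁,…,λ_m be positive integers and d₁,…,d_m natural numbers such that the pairs (λ_i,d_i) are strictly decreasing in the lexicographic order (for i < j, either λ_i > λ_j, or λ_i = λ_j and d_i > d_j), let c₁,…,c_m ∈ ℚ, and define p(k) = Σ_{i=1}^m c_i · λ_i^k · k^{d_i}. Then p(k) ≥ 0 for all but finitely many k ∈ ℕ if and only if either all c_i are zero, or the coefficient c_{i₀} with least index i₀ among the nonzero coefficients satisfies c_{i₀} > 0. -/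
open Module

/-!
The first nonzero term `c i₀ * l i₀ ^ k * k ^ d i₀` dominates: every later term has a
lexicographically smaller pair `(l i, d i)` and is therefore little-o of it. So `c i₀ * p k` is
eventually positive, i.e. `p` eventually has the sign of `c i₀`.
-/

open Filter Asymptotics

lemma isLittleO_pow_mul_pow_of_toLex_lt {a b : ℝ} {e D : ℕ} (ha : 0 ≤ a)
    (hlt : toLex (a, e) < toLex (b, D)) :
    (fun k : ℕ => a ^ k * (k : ℝ) ^ e) =o[atTop] fun k : ℕ => b ^ k * (k : ℝ) ^ D := by
  rcases Prod.Lex.toLex_lt_toLex.1 hlt with hab | ⟨rfl, hed⟩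
  · have hexp : (fun k : ℕ => (k : ℝ) ^ e * a ^ k) =o[atTop] fun k : ℕ => b ^ k := by
      refine isLittleO_pow_const_mul_const_pow_const_pow_of_norm_lt e ?_
      rwa [Real.norm_of_nonneg ha]
    have hone : (fun _ : ℕ => (1 : ℝ)) =O[atTop] fun k : ℕ => (k : ℝ) ^ D :=
      IsBigO.of_bound 1 <| (eventually_ge_atTop 1).mono fun k hk => by
        simpa using one_le_pow₀ (M₀ := ℝ) (by exact_mod_cast hk)
    have hbase : (fun k : ℕ => b ^ k) =O[atTop] fun k : ℕ => b ^ k * (k : ℝ) ^ D := by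
      simpa only [mul_one] using (isBigO_refl (fun k : ℕ => b ^ k) atTop).mul hone
    simpa only [mul_comm] using hexp.trans_isBigO hbase
  · exact (isBigO_refl _ _).mul_isLittleO
      ((isLittleO_pow_pow_atTop_of_lt hed).comp_tendsto tendsto_natCast_atTop_atTop)

lemma eventually_pos_of_isLittleO_sub {α : Type*} {l : Filter α} {f g : α → ℝ} {c : ℝ}
    (hc : 0 < c) (hg : ∀ᶠ x in l, 0 < g x) (h : (fun x => f x - c * g x) =o[l] g) :
    ∀ᶠ x in l, 0 < f x := by
  filter_upwards [h.def (half_pos hc), hg] with x hx hgx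
  rw [Real.norm_of_nonneg hgx.le] at hx
  have := (abs_le.1 hx).1
  nlinarith

section LeadingTerm

open Finset

variable {ι : Type*} [Fintype ι] [LinearOrder ι] (r : ι → ℝ) (d : ι → ℕ) (c : ι → ℝ) (i₀ : ι)

lemma isLittleO_sum_sub_leading (hr : ∀ i, 0 ≤ r i)
    (hdom : ∀ j, i₀ < j → toLex (r j, d j) < toLex (r i₀, d i₀))
    (hzero : ∀ j, j < i₀ → c j = 0) :
    (fun k : ℕ => ∑ i, c i * r i ^ k * (k : ℝ) ^ d i - c i₀ * (r i₀ ^ k * (k : ℝ) ^ d i₀))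
      =o[atTop] fun k : ℕ => r i₀ ^ k * (k : ℝ) ^ d i₀ := by
  have hsplit : ∀ k : ℕ, ∑ i, c i * r i ^ k * (k : ℝ) ^ d i - c i₀ * (r i₀ ^ k * (k : ℝ) ^ d i₀)
      = ∑ i ∈ univ.erase i₀, c i * (r i ^ k * (k : ℝ) ^ d i) := by
    intro k
    rw [← add_sum_erase _ _ (mem_univ i₀)]
    simp only [mul_assoc, add_sub_cancel_left]
  simp only [hsplit]
  refine IsLittleO.fun_sum fun i hi => ?_
  rcases lt_or_gt_of_ne (ne_of_mem_erase hi) with hlt | hgt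
  · simp [hzero i hlt]
  · exact (isLittleO_pow_mul_pow_of_toLex_lt (hr i) (hdom i hgt)).const_mul_left (c i)

lemma eventually_pos_leading_mul_sum (hr : ∀ i, 0 ≤ r i) (hr₀ : 0 < r i₀)
    (hdom : ∀ j, i₀ < j → toLex (r j, d j) < toLex (r i₀, d i₀))
    (hzero : ∀ j, j < i₀ → c j = 0) (hc : c i₀ ≠ 0) :
    ∀ᶠ k : ℕ in atTop, 0 < c i₀ * ∑ i, c i * r i ^ k * (k : ℝ) ^ d i := by
  refine eventually_pos_of_isLittleO_sub (sq_pos_of_ne_zero hc) ?_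
    (((isLittleO_sum_sub_leading r d c i₀ hr hdom hzero).const_mul_left (c i₀)).congr_left
      fun k => ?_)
  · filter_upwards [eventually_ge_atTop 1] with k hk
    have : (0 : ℝ) < k := by exact_mod_cast hk
    positivity
  · ring

end LeadingTerm

theorem dta_correct_general
    (m : ℕ)
    (l : Fin m → ℤ) (hlpos : ∀ i, 0 < l i)
    (d : Fin m → ℕ)
    (hlex : ∀ i j : Fin m, i < j → l j < l i ∨ (l i = l j ∧ d j < d i))
    (c : Fin m → ℚ) :
    (∃ K : ℕ, ∀ k : ℕ, K ≤ k → 0 ≤ ∑ i : Fin m, c i * (l i : ℚ) ^ k * (k : ℚ) ^ (d i)) ↔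
    ((∀ i, c i = 0) ∨ ∃ i₀ : Fin m, 0 < c i₀ ∧ ∀ j : Fin m, j < i₀ → c j = 0) := by
  set p : ℕ → ℝ := fun k => ∑ i, (c i : ℝ) * (l i : ℝ) ^ k * (k : ℝ) ^ d i
  have hcast : ∀ k : ℕ, ((∑ i, c i * (l i : ℚ) ^ k * (k : ℚ) ^ d i : ℚ) : ℝ) = p k := by
    intro k; push_cast; rfl
  have hsign : ∀ i₀, (∀ j, j < i₀ → c j = 0) → c i₀ ≠ 0 →
      ∀ᶠ k in atTop, 0 < (c i₀ : ℝ) * p k := by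
    intro i₀ hzero hc
    refine eventually_pos_leading_mul_sum (fun i => (l i : ℝ)) d (fun i => (c i : ℝ)) i₀
      (fun i => by exact_mod_cast (hlpos i).le) (by exact_mod_cast hlpos i₀) (fun j hj => ?_)
      (fun j hj => by simp [hzero j hj]) (by exact_mod_cast hc)
    simpa only [Prod.Lex.toLex_lt_toLex, Int.cast_lt, Int.cast_inj, eq_comm] using hlex i₀ j hj
  simp_rw [← eventually_atTop, ← Rat.cast_nonneg (K := ℝ), hcast]
  constructor
  · intro hnonneg
    by_cases hall : ∀ i, c i = 0
    · exact Or.inl hall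
    rw [not_forall] at hall
    obtain ⟨i₀, hi₀, hmin⟩ := WellFounded.has_min wellFounded_lt {i | c i ≠ 0} hall
    have hzero : ∀ j, j < i₀ → c j = 0 := fun j hj => by_contra fun hj' => hmin j hj' hj
    obtain ⟨k, hk, hpk⟩ := ((hsign i₀ hzero hi₀).and hnonneg).exists
    exact Or.inr ⟨i₀, by exact_mod_cast pos_of_mul_pos_left hk hpk, hzero⟩
  · rintro (hall | ⟨i₀, hpos, hzero⟩)
    · exact Eventually.of_forall fun k => by simp [p, hall]
    · filter_upwards [hsign i₀ hzero hpos.ne'] with k hk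
      exact (pos_of_mul_pos_right hk (by exact_mod_cast hpos.le)).le

/-- Correctness of dominant term analysis: an exponential-polynomial
sequence is eventually nonnegative iff all coefficients vanish or the first nonzero
coefficient is positive. -/
theorem dta_correct
    (m : ℕ) (hm : 1 ≤ m)
    (l : Fin m → ℤ) (hlpos : ∀ i, 0 < l i)
    (d : Fin m → ℕ)
    (hlex : ∀ i j : Fin m, i < j → l j < l i ∨ (l i = l j ∧ d j < d i))
    (c : Fin m → ℚ) :
    (∃ K : ℕ, ∀ k : ℕ, K ≤ k → 0 ≤ ∑ i : Fin m, c i * (l i : ℚ) ^ k * (k : ℚ) ^ (d i)) ↔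
    ((∀ i, c i = 0) ∨ ∃ i₀ : Fin m, 0 < c i₀ ∧ ∀ j : Fin m, j < i₀ → c j = 0) :=
  dta_correct_general m l hlpos d hlex c
end

section
/- Let A be an n × n matrix over ℚ with integer spectrum, i.e., the characteristic polynomial of A splits over ℚ and every root of it is an integer. Then there exist a positive integer Q, a natural number m, integers λ₁,…,λ_m, natural numbers d₁,…,d_m, n × n integer matrices C₁,…,C_m, and K ∈ ℕ such that for all k ≥ K, Q · A^k = Σ_{j=1}^m λ_j^k · k^{d_j} · C_j. Consequently, for every row vector c ∈ ℤ^n, the function k ↦ cᵀ A^k x has, for all sufficiently large k, the closed form (1/Q) Σ_j λ_j^k k^{d_j} (a_jᵀ x) with integer row vectors a_jᵀ = cᵀ C_j. -/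
open Module

/-! Over `ℚ` the characteristic polynomial is `c · ∏ (X - μ) ^ e μ` over its distinct integer roots,
and these prime-power factors are pairwise coprime, so Bézout identities split the identity into
pieces `p` with `(A - μ) ^ e * p = 0`. On such a piece the binomial theorem gives
`A ^ k * p = ∑ r < e, C(k, r) μ ^ (k - r) (A - μ) ^ r * p` for `k ≥ e`, and
`C(k, r) μ ^ (k - r) = μ ^ k · (descPochhammer r)(k) / (r! μ ^ r)` is an exponential polynomial in
`k` when `μ ≠ 0`, while it vanishes for `k > r` when `μ = 0`. Clearing the finitely many
denominators of the resulting rational matrices gives `Q` and integer matrices. -/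

open Polynomial Filter

section IntExpPoly

variable {M : Type*} [AddCommGroup M] [Module ℚ M]

def IsIntExpPoly (f : ℕ → M) : Prop :=
  ∃ (m : ℕ) (l : Fin m → ℤ) (d : Fin m → ℕ) (c : Fin m → M),
    ∀ᶠ k in atTop, f k = ∑ j, ((l j : ℚ) ^ k * (k : ℚ) ^ d j) • c j

namespace IsIntExpPoly

theorem congr {f g : ℕ → M} (hg : IsIntExpPoly g) (h : f =ᶠ[atTop] g) : IsIntExpPoly f := by
  obtain ⟨m, l, d, c, hc⟩ := hg
  exact ⟨m, l, d, c, h.trans hc⟩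

theorem of_eventuallyEq_zero {f : ℕ → M} (h : f =ᶠ[atTop] 0) : IsIntExpPoly f :=
  ⟨0, ![], ![], ![], h.mono fun k hk => by simpa using hk⟩

theorem monomial (l : ℤ) (d : ℕ) (c : M) :
    IsIntExpPoly fun k => ((l : ℚ) ^ k * (k : ℚ) ^ d) • c :=
  ⟨1, ![l], ![d], ![c], by simp⟩

theorem add {f g : ℕ → M} (hf : IsIntExpPoly f) (hg : IsIntExpPoly g) :
    IsIntExpPoly (f + g) := by
  obtain ⟨m₁, l₁, d₁, c₁, h₁⟩ := hf
  obtain ⟨m₂, l₂, d₂, c₂, h₂⟩ := hg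
  refine ⟨m₁ + m₂, Fin.append l₁ l₂, Fin.append d₁ d₂, Fin.append c₁ c₂, ?_⟩
  filter_upwards [h₁, h₂] with k hk₁ hk₂
  simp [Fin.sum_univ_add, hk₁, hk₂]

theorem finset_sum {ι : Type*} (s : Finset ι) {F : ι → ℕ → M}
    (h : ∀ i ∈ s, IsIntExpPoly (F i)) : IsIntExpPoly fun k => ∑ i ∈ s, F i k := by
  classical
  induction s using Finset.induction_on with
  | empty => exact of_eventuallyEq_zero (by simp [EventuallyEq])
  | insert i s hi ih =>
    simp_rw [Finset.sum_insert hi]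
    exact (h i (s.mem_insert_self i)).add (ih fun j hj => h j (Finset.mem_insert_of_mem hj))

end IsIntExpPoly

theorem isIntExpPoly_choose_mul_pow_smul (μ : ℤ) (r : ℕ) (v : M) :
    IsIntExpPoly fun k => ((k.choose r : ℚ) * (μ : ℚ) ^ (k - r)) • v := by
  rcases eq_or_ne (μ : ℚ) 0 with hμ | hμ
  · refine .of_eventuallyEq_zero ?_
    filter_upwards [eventually_gt_atTop r] with k hk
    simp [hμ, Nat.sub_ne_zero_of_lt hk]
  · refine (IsIntExpPoly.finset_sum (Finset.range (r + 1)) fun d _ =>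
      IsIntExpPoly.monomial μ d
        (((descPochhammer ℚ r).coeff d / r.factorial / (μ : ℚ) ^ r) • v)).congr ?_
    filter_upwards [eventually_ge_atTop r] with k hk
    rw [Nat.cast_choose_eq_descPochhammer_div, pow_sub₀ _ hμ hk,
      eval_eq_sum_range' ((descPochhammer_natDegree ℚ r).le.trans_lt (lt_add_one r)),
      Finset.sum_div, Finset.sum_mul, Finset.sum_smul]
    refine Finset.sum_congr rfl fun d _ => ?_
    rw [smul_smul]
    ring_nf

end IntExpPoly

section Algebra

variable {R : Type*} [Ring R] [Algebra ℚ R]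

theorem pow_mul_eq_sum_choose_smul {a p : R} {c : ℚ} {e : ℕ}
    (h : (a - algebraMap ℚ R c) ^ e * p = 0) {k : ℕ} (hk : e ≤ k) :
    a ^ k * p = ∑ r ∈ Finset.range e,
      ((k.choose r : ℚ) * c ^ (k - r)) • ((a - algebraMap ℚ R c) ^ r * p) := by
  have hcomm : Commute (a - algebraMap ℚ R c) (algebraMap ℚ R c) := (Algebra.commutes c _).symm
  conv_lhs => rw [← sub_add_cancel a (algebraMap ℚ R c), hcomm.add_pow, Finset.sum_mul]
  have hterm : ∀ r,
      (a - algebraMap ℚ R c) ^ r * algebraMap ℚ R c ^ (k - r) * (k.choose r : R) * p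
        = ((k.choose r : ℚ) * c ^ (k - r)) • ((a - algebraMap ℚ R c) ^ r * p) := fun r => by
    rw [← map_pow, ← map_natCast (algebraMap ℚ R), mul_assoc, mul_assoc,
      ← mul_assoc (algebraMap ℚ R _), ← map_mul, Algebra.left_comm, Algebra.smul_def,
      mul_comm (c ^ _)]
  simp_rw [hterm]
  rw [← Finset.sum_range_add_sum_Ico _ (by omega : e ≤ k + 1),
    Finset.sum_eq_zero (s := Finset.Ico e (k + 1)), add_zero]
  intro r hr
  rw [← Nat.sub_add_cancel (Finset.mem_Ico.mp hr).1, pow_add, mul_assoc, h, mul_zero, smul_zero]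

theorem isIntExpPoly_pow_mul_of_pow_sub_mul_eq_zero {a p : R} {μ : ℤ} {e : ℕ}
    (h : (a - algebraMap ℚ R μ) ^ e * p = 0) : IsIntExpPoly fun k => a ^ k * p :=
  (IsIntExpPoly.finset_sum (Finset.range e) fun r _ =>
    isIntExpPoly_choose_mul_pow_smul μ r _).congr <|
      (eventually_ge_atTop e).mono fun _ hk => pow_mul_eq_sum_choose_smul h hk

theorem isIntExpPoly_pow_mul_of_aeval_prod_mul_eq_zero (s : Finset ℚ)
    (hs : ∀ μ ∈ s, ∃ z : ℤ, (z : ℚ) = μ) (e : ℚ → ℕ) {a p : R}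
    (h : aeval a (∏ μ ∈ s, (X - C μ) ^ e μ) * p = 0) : IsIntExpPoly fun k => a ^ k * p := by
  classical
  induction s using Finset.induction_on generalizing p with
  | empty => exact .of_eventuallyEq_zero (.of_forall fun k => by simp_all)
  | insert μ s hμ ih =>
    obtain ⟨z, rfl⟩ := hs μ (s.mem_insert_self μ)
    set f := (X - C (z : ℚ)) ^ e z
    set g := ∏ ν ∈ s, (X - C ν) ^ e ν
    rw [Finset.prod_insert hμ] at h
    have hfg : IsCoprime f g := IsCoprime.prod_right fun ν hν =>
      (isCoprime_X_sub_C_of_isUnit_sub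
        (sub_ne_zero.2 (ne_of_mem_of_not_mem hν hμ).symm).isUnit).pow
    obtain ⟨u, v, huv⟩ := hfg
    have hp : p = aeval a (v * g) * p + aeval a (u * f) * p := by
      rw [← add_mul, ← map_add, add_comm, huv, map_one, one_mul]
    have hf : aeval a f = (a - algebraMap ℚ R z) ^ e z := by simp [f]
    have h₁ : (a - algebraMap ℚ R z) ^ e z * (aeval a (v * g) * p) = 0 := by
      rw [← hf, ← mul_assoc, ← map_mul, show f * (v * g) = v * (f * g) by ring, map_mul,
        mul_assoc, h, mul_zero]
    have h₂ : aeval a g * (aeval a (u * f) * p) = 0 := by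
      rw [← mul_assoc, ← map_mul, show g * (u * f) = u * (f * g) by ring, map_mul,
        mul_assoc, h, mul_zero]
    rw [hp]
    simp_rw [mul_add]
    exact (isIntExpPoly_pow_mul_of_pow_sub_mul_eq_zero h₁).add
      (ih (fun ν hν => hs ν (Finset.mem_insert_of_mem hν)) h₂)

theorem isIntExpPoly_pow_of_aeval_eq_zero {q : ℚ[X]} (hq : q ≠ 0) (hsplit : q.Splits)
    (hroots : ∀ x ∈ q.roots, ∃ z : ℤ, (z : ℚ) = x) {a : R} (h : aeval a q = 0) :
    IsIntExpPoly (a ^ ·) := by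
  classical
  have hprod : aeval a (∏ μ ∈ q.roots.toFinset, (X - C μ) ^ q.roots.count μ) * 1 = 0 := by
    rw [hsplit.eq_prod_roots, map_mul, aeval_C, Finset.prod_multiset_map_count,
      ((IsUnit.mk0 _ (leadingCoeff_ne_zero.2 hq)).map (algebraMap ℚ R)).mul_right_eq_zero] at h
    rw [h, zero_mul]
  simpa using isIntExpPoly_pow_mul_of_aeval_prod_mul_eq_zero _
    (fun μ hμ => hroots μ (Multiset.mem_toFinset.mp hμ)) _ hprod

end Algebra

theorem exists_pos_nat_mul_eq_intCast {ι : Type*} [Fintype ι] (x : ι → ℚ) :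
    ∃ Q : ℕ, 0 < Q ∧ ∀ i, ∃ z : ℤ, (z : ℚ) = Q * x i := by
  classical
  refine ⟨∏ i, (x i).den, Finset.prod_pos fun i _ => (x i).den_pos, fun i => ?_⟩
  refine ⟨(∏ j ∈ Finset.univ.erase i, (x j).den : ℕ) * (x i).num, ?_⟩
  rw [← Finset.prod_erase_mul _ _ (Finset.mem_univ i)]
  push_cast
  rw [mul_assoc, Rat.den_mul_eq_num]

namespace Matrix

theorem exists_pos_nat_smul_eq_map_intCast {ι m n : Type*} [Fintype ι] [Fintype m]
    [Fintype n] (C : ι → Matrix m n ℚ) :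
    ∃ Q : ℕ, 0 < Q ∧ ∃ D : ι → Matrix m n ℤ, ∀ j, (D j).map (↑) = (Q : ℚ) • C j := by
  obtain ⟨Q, hQ, hz⟩ := exists_pos_nat_mul_eq_intCast fun t : ι × m × n => C t.1 t.2.1 t.2.2
  choose z hz using hz
  exact ⟨Q, hQ, fun j => .of fun a b => z (j, a, b), fun j => by ext a b; simp [hz]⟩

theorem intCast_dotProduct_mulVec_of_smul_eq_sum {ι n : Type*} [Fintype ι] [Fintype n]
    {B : Matrix n n ℚ} {Q : ℚ} {s : ι → ℚ} {D : ι → Matrix n n ℤ}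
    (h : Q • B = ∑ j, s j • (D j).map (↑)) (c : n → ℤ) (x : n → ℚ) :
    Q * ((fun i => (c i : ℚ)) ⬝ᵥ B *ᵥ x) = ∑ j, s j * ((fun i => ((c ᵥ* D j) i : ℚ)) ⬝ᵥ x) := by
  have hcast : ∀ j, (fun i => ((c ᵥ* D j) i : ℚ)) = (fun i => (c i : ℚ)) ᵥ* (D j).map (↑) :=
    fun j => funext ((Int.castRingHom ℚ).map_vecMul (D j) c)
  simp_rw [hcast, ← dotProduct_mulVec, ← smul_eq_mul, ← dotProduct_smul, ← smul_mulVec, h,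
    sum_mulVec, dotProduct_sum]

end Matrix

open Matrix in
/-- a rational matrix with integer spectrum has, for all sufficiently
large `k`, a closed form `Q • A^k = Σ_j λ_j^k k^{d_j} • C_j` with integer bases,
exponents, and matrices; consequently `cᵀ A^k x` has an exponential-polynomial
closed form `(1/Q) Σ_j λ_j^k k^{d_j} (a_jᵀ x)` with `a_jᵀ = cᵀ C_j`. -/
theorem integer_spectrum_closed_form
    (n : ℕ) (A : Matrix (Fin n) (Fin n) ℚ)
    (hsplit : A.charpoly.Splits)
    (hint : ∀ x ∈ A.charpoly.roots, ∃ z : ℤ, (z : ℚ) = x) :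
    ∃ (Q : ℕ) (_ : 0 < Q) (m : ℕ) (l : Fin m → ℤ) (d : Fin m → ℕ)
      (C : Fin m → Matrix (Fin n) (Fin n) ℤ) (K : ℕ),
      (∀ k : ℕ, K ≤ k →
        (Q : ℚ) • A ^ k =
          ∑ j : Fin m, ((l j : ℚ) ^ k * (k : ℚ) ^ (d j)) • (C j).map (fun z => (z : ℚ))) ∧
      (∀ (cvec : Fin n → ℤ) (x : Fin n → ℚ) (k : ℕ), K ≤ k →
        (Q : ℚ) * ((fun i => ((cvec i : ℚ))) ⬝ᵥ (A ^ k).mulVec x) =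
          ∑ j : Fin m, (l j : ℚ) ^ k * (k : ℚ) ^ (d j) *
            ((fun i => ((cvec ᵥ* C j) i : ℚ)) ⬝ᵥ x)) := by
  obtain ⟨m, l, d, C, hC⟩ := isIntExpPoly_pow_of_aeval_eq_zero A.charpoly_monic.ne_zero hsplit
    hint (aeval_self_charpoly A)
  obtain ⟨K, hK⟩ := eventually_atTop.mp hC
  obtain ⟨Q, hQ, D, hD⟩ := exists_pos_nat_smul_eq_map_intCast C
  have hQA : ∀ k, K ≤ k →
      (Q : ℚ) • A ^ k = ∑ j, ((l j : ℚ) ^ k * (k : ℚ) ^ d j) • (D j).map (fun z => (z : ℚ)) :=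
    fun k hk => by simp_rw [hK k hk, Finset.smul_sum, hD, smul_comm (Q : ℚ)]
  exact ⟨Q, hQ, m, l, d, D, K, hQA, fun c x k hk =>
    intCast_dotProduct_mulVec_of_smul_eq_sum (hQA k hk) c x⟩
end
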